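/- Fix k ≥ 3, weights p₁, …, p_k > 0 with Σ_ℓ p_ℓ = 1, and standard deviations σ₁, …, σ_k > 0, and let x₁, …, x_n ∈ ℝ (n ≥ 1) be arbitrary observations. Then the posterior of the means derived from the Jeffreys prior is improper: ∫_{ℝ^k} [ Π_{i=1}^n g(x_i; μ) ] · √(det I(μ)) dμ = +∞, where g(x;μ) = Σ_{ℓ=1}^k p_ℓ φ_{σ_ℓ}(x − μ_ℓ) is the mixture likelihood contribution and I(μ) is the mean Fisher matrix. -/

import Mathlib

open MeasureTheory

noncomputable section

/-- Density of a centered Gaussian with standard deviation `σ`. -/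
def gaussPdf (σ x : ℝ) : ℝ :=
  (Real.sqrt (2 * Real.pi * σ ^ 2))⁻¹ * Real.exp (-(x ^ 2) / (2 * σ ^ 2))

/-- Gaussian mixture density `g(x; μ) = ∑ ℓ pℓ φ_{σℓ}(x - μℓ)`. -/
def gaussMix {k : ℕ} (p σ μ : Fin k → ℝ) (x : ℝ) : ℝ :=
  ∑ ℓ, p ℓ * gaussPdf (σ ℓ) (x - μ ℓ)

/-- Mean Fisher matrix of the Gaussian mixture with fixed weights `p` and scales `σ`. -/
def meanFisher {k : ℕ} (p σ μ : Fin k → ℝ) : Matrix (Fin k) (Fin k) ℝ := fun j h =>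
  p j * p h / (σ j ^ 2 * σ h ^ 2) *
    ∫ x : ℝ,
      (x - μ j) * (x - μ h) * gaussPdf (σ j) (x - μ j) * gaussPdf (σ h) (x - μ h) /
        gaussMix p σ μ x

/-!
The likelihood stays bounded below as long as one mean stays bounded, since
`g(x; μ) ≥ p₁ φ_{σ₁}(x - μ₁)`. The Jeffreys density stays bounded below once the means are far
apart: the diagonal Fisher entries are bounded below uniformly because `g` is bounded, while
`g ≥ √(p_j φ_j · p_h φ_h)` makes `I_{jh}` decay like `exp (-c (μ_j - μ_h)²)`, so by the Leibniz
formula `det I` is close to the product of its diagonal. Both bounds hold on a box of infinite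
volume in which `μ₁ ∈ [0, 1]`, consecutive means are far apart and the last mean ranges over a
half-line.
-/
open Real Filter Topology

section Gaussian

variable {σ : ℝ}

lemma gaussPdf_pos (hσ : 0 < σ) (x : ℝ) : 0 < gaussPdf σ x := by
  unfold gaussPdf; positivity

lemma gaussPdf_eq_mul_exp (σ x : ℝ) :
    gaussPdf σ x = gaussPdf σ 0 * exp (-(x ^ 2) / (2 * σ ^ 2)) := by
  simp [gaussPdf]

lemma gaussPdf_le_gaussPdf_of_abs_le {x y : ℝ} (hxy : |x| ≤ |y|) :
    gaussPdf σ y ≤ gaussPdf σ x := by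
  unfold gaussPdf
  have : x ^ 2 ≤ y ^ 2 := sq_le_sq.2 hxy
  gcongr

lemma continuous_gaussPdf (σ : ℝ) : Continuous (gaussPdf σ) := by
  unfold gaussPdf; fun_prop

lemma sq_gaussPdf (hσ : 0 < σ) (x : ℝ) :
    gaussPdf σ x ^ 2 = gaussPdf σ 0 ^ 2 * exp (-(σ ^ 2)⁻¹ * x ^ 2) := by
  rw [gaussPdf_eq_mul_exp, mul_pow, ← exp_nat_mul]
  congr 2
  field_simp
  ring

lemma sqrt_gaussPdf_div_le {p a : ℝ} (hσ : 0 < σ) (ha : a ≤ (4 * σ ^ 2)⁻¹) (x : ℝ) :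
    √(gaussPdf σ x / p) ≤ √(gaussPdf σ 0 / p) * exp (-a * x ^ 2) := by
  rw [gaussPdf_eq_mul_exp, mul_div_right_comm, sqrt_mul' _ (exp_pos _).le, ← exp_half]
  gcongr
  have hax := mul_le_mul_of_nonneg_right ha (sq_nonneg x)
  have : -x ^ 2 / (2 * σ ^ 2) / 2 = -((4 * σ ^ 2)⁻¹ * x ^ 2) := by field_simp; ring
  linarith

end Gaussian

section Mixture

variable {k : ℕ} {p σ : Fin k → ℝ}

lemma mul_gaussPdf_le_gaussMix (hp : ∀ ℓ, 0 < p ℓ) (hσ : ∀ ℓ, 0 < σ ℓ) (μ : Fin k → ℝ)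
    (y : ℝ) (j : Fin k) : p j * gaussPdf (σ j) (y - μ j) ≤ gaussMix p σ μ y :=
  Finset.single_le_sum (f := fun ℓ => p ℓ * gaussPdf (σ ℓ) (y - μ ℓ))
    (fun ℓ _ => (mul_pos (hp ℓ) (gaussPdf_pos (hσ ℓ) _)).le) (Finset.mem_univ j)

lemma gaussMix_pos (hk : 0 < k) (hp : ∀ ℓ, 0 < p ℓ) (hσ : ∀ ℓ, 0 < σ ℓ) (μ : Fin k → ℝ)
    (y : ℝ) : 0 < gaussMix p σ μ y :=
  (mul_pos (hp ⟨0, hk⟩) (gaussPdf_pos (hσ _) _)).trans_le (mul_gaussPdf_le_gaussMix hp hσ μ y _)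

lemma gaussMix_le_sum (hp : ∀ ℓ, 0 < p ℓ) (μ : Fin k → ℝ) (y : ℝ) :
    gaussMix p σ μ y ≤ ∑ ℓ, p ℓ * gaussPdf (σ ℓ) 0 :=
  Finset.sum_le_sum fun ℓ _ => mul_le_mul_of_nonneg_left
    (gaussPdf_le_gaussPdf_of_abs_le (by simp)) (hp ℓ).le

lemma continuous_gaussMix (p σ μ : Fin k → ℝ) : Continuous (gaussMix p σ μ) := by
  unfold gaussMix
  have := continuous_gaussPdf
  fun_prop

end Mixture

section Moments

variable {b : ℝ}

lemma integrable_sq_mul_exp_neg_mul_sq (hb : 0 < b) :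
    Integrable fun t : ℝ => t ^ 2 * exp (-b * t ^ 2) := by
  simpa using integrable_rpow_mul_exp_neg_mul_sq hb (s := 2) (by norm_num)

lemma integral_sq_mul_exp_neg_mul_sq_pos (hb : 0 < b) :
    0 < ∫ t : ℝ, t ^ 2 * exp (-b * t ^ 2) := by
  rw [integral_pos_iff_support_of_nonneg (fun t => by positivity)
    (integrable_sq_mul_exp_neg_mul_sq hb)]
  have : Set.Ioi 0 ⊆ Function.support fun t : ℝ => t ^ 2 * exp (-b * t ^ 2) :=
    fun t (ht : 0 < t) => by simp only [Function.mem_support]; positivity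
  exact (by simp : (0 : ENNReal) < volume (Set.Ioi (0 : ℝ))).trans_le (measure_mono this)

lemma integrable_avg_sq_mul_exp_neg_mul_sq_sub (hb : 0 < b) (α β : ℝ) :
    Integrable fun x : ℝ =>
      ((x - α) ^ 2 * exp (-b * (x - α) ^ 2) + (x - β) ^ 2 * exp (-b * (x - β) ^ 2)) / 2 :=
  (((integrable_sq_mul_exp_neg_mul_sq hb).comp_sub_right α).add
    ((integrable_sq_mul_exp_neg_mul_sq hb).comp_sub_right β)).div_const 2

lemma integral_sq_mul_exp_neg_mul_sq_sub (b α : ℝ) :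
    ∫ x : ℝ, (x - α) ^ 2 * exp (-b * (x - α) ^ 2) = ∫ t : ℝ, t ^ 2 * exp (-b * t ^ 2) :=
  integral_sub_right_eq_self (fun t : ℝ => t ^ 2 * exp (-b * t ^ 2)) α

lemma integral_avg_sq_mul_exp_neg_mul_sq_sub (hb : 0 < b) (α β : ℝ) :
    ∫ x : ℝ, ((x - α) ^ 2 * exp (-b * (x - α) ^ 2) + (x - β) ^ 2 * exp (-b * (x - β) ^ 2)) / 2 =
      ∫ t : ℝ, t ^ 2 * exp (-b * t ^ 2) := by
  rw [integral_div, integral_add ((integrable_sq_mul_exp_neg_mul_sq hb).comp_sub_right α)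
    ((integrable_sq_mul_exp_neg_mul_sq hb).comp_sub_right β), integral_sq_mul_exp_neg_mul_sq_sub,
    integral_sq_mul_exp_neg_mul_sq_sub]
  ring

lemma mul_div_le_sqrt_div_mul_sqrt_div {x y z p q : ℝ} (hx : 0 < x) (hy : 0 < y) (hp : 0 < p)
    (hq : 0 < q) (hxz : p * x ≤ z) (hyz : q * y ≤ z) : x * y / z ≤ √(x / p) * √(y / q) := by
  have hz : 0 < z := (mul_pos hp hx).trans_le hxz
  rw [← sqrt_mul (by positivity), le_sqrt (by positivity) (by positivity), div_pow,
    div_le_iff₀ (by positivity)]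
  calc (x * y) ^ 2 = x / p * (y / q) * ((p * x) * (q * y)) := by field_simp
    _ ≤ x / p * (y / q) * z ^ 2 := by
      gcongr; rw [sq]; exact mul_le_mul hxz hyz (by positivity) hz.le

lemma abs_mul_exp_mul_abs_mul_exp_le {a T u v : ℝ} (ha : 0 < a) (hT : 0 ≤ T)
    (huv : T ≤ |u - v|) :
    |u| * exp (-a * u ^ 2) * (|v| * exp (-a * v ^ 2)) ≤
      exp (-(a / 4) * T ^ 2) *
        ((u ^ 2 * exp (-(a / 2) * u ^ 2) + v ^ 2 * exp (-(a / 2) * v ^ 2)) / 2) := by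
  have hT2 : T ^ 2 ≤ (u - v) ^ 2 := by simpa using pow_le_pow_left₀ hT huv 2
  -- `u² + v² ≥ (u - v)² / 2 ≥ T² / 2`: half of the decay pays for the factor `exp (-(a / 4) T²)`
  have hsplit : exp (-a * u ^ 2) * exp (-a * v ^ 2) ≤
      exp (-(a / 4) * T ^ 2) * (exp (-(a / 2) * u ^ 2) * exp (-(a / 2) * v ^ 2)) := by
    have : T ^ 2 ≤ 2 * (u ^ 2 + v ^ 2) := by nlinarith [sq_nonneg (u + v)]
    simp only [← exp_add]
    exact exp_le_exp.2 (by nlinarith [mul_le_mul_of_nonneg_left this ha.le])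
  set eu := exp (-(a / 2) * u ^ 2)
  set ev := exp (-(a / 2) * v ^ 2)
  have heu : eu ≤ 1 := exp_le_one_iff.2 (by nlinarith [sq_nonneg u])
  have hev : ev ≤ 1 := exp_le_one_iff.2 (by nlinarith [sq_nonneg v])
  have hamgm : |u| * |v| * (eu * ev) ≤ (u ^ 2 * eu + v ^ 2 * ev) / 2 := by
    have hprod : 0 ≤ eu * ev := by positivity
    calc |u| * |v| * (eu * ev) ≤ (u ^ 2 + v ^ 2) / 2 * (eu * ev) := by
          gcongr; nlinarith [sq_nonneg (|u| - |v|), sq_abs u, sq_abs v]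
      _ = (u ^ 2 * eu * ev + v ^ 2 * ev * eu) / 2 := by ring
      _ ≤ (u ^ 2 * eu * 1 + v ^ 2 * ev * 1) / 2 := by gcongr
      _ = (u ^ 2 * eu + v ^ 2 * ev) / 2 := by ring
  calc |u| * exp (-a * u ^ 2) * (|v| * exp (-a * v ^ 2))
      = |u| * |v| * (exp (-a * u ^ 2) * exp (-a * v ^ 2)) := by ring
    _ ≤ |u| * |v| * (exp (-(a / 4) * T ^ 2) * (eu * ev)) := by gcongr
    _ ≤ exp (-(a / 4) * T ^ 2) * ((u ^ 2 * eu + v ^ 2 * ev) / 2) := by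
      rw [mul_left_comm]; gcongr

end Moments

section Fisher

variable {k : ℕ} {p σ : Fin k → ℝ}

def fisherIntegrand (p σ μ : Fin k → ℝ) (j h : Fin k) (x : ℝ) : ℝ :=
  (x - μ j) * (x - μ h) * gaussPdf (σ j) (x - μ j) * gaussPdf (σ h) (x - μ h) /
    gaussMix p σ μ x

lemma meanFisher_apply (p σ μ : Fin k → ℝ) (j h : Fin k) :
    meanFisher p σ μ j h =
      p j * p h / (σ j ^ 2 * σ h ^ 2) * ∫ x, fisherIntegrand p σ μ j h x :=
  rfl

lemma continuous_fisherIntegrand (hp : ∀ ℓ, 0 < p ℓ) (hσ : ∀ ℓ, 0 < σ ℓ) (μ : Fin k → ℝ)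
    (j h : Fin k) : Continuous (fisherIntegrand p σ μ j h) := by
  have := continuous_gaussPdf
  exact Continuous.div (by fun_prop) (continuous_gaussMix p σ μ)
    fun x => (gaussMix_pos j.pos hp hσ μ x).ne'

/-- The mixture density dominates the geometric mean of any two of its components. -/
lemma abs_fisherIntegrand_le (hp : ∀ ℓ, 0 < p ℓ) (hσ : ∀ ℓ, 0 < σ ℓ) (μ : Fin k → ℝ)
    (j h : Fin k) {a : ℝ} (haj : a ≤ (4 * σ j ^ 2)⁻¹) (hah : a ≤ (4 * σ h ^ 2)⁻¹) (x : ℝ) :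
    |fisherIntegrand p σ μ j h x| ≤
      √(gaussPdf (σ j) 0 / p j) * √(gaussPdf (σ h) 0 / p h) *
        (|x - μ j| * exp (-a * (x - μ j) ^ 2) * (|x - μ h| * exp (-a * (x - μ h) ^ 2))) := by
  have hφj := gaussPdf_pos (hσ j) (x - μ j)
  have hφh := gaussPdf_pos (hσ h) (x - μ h)
  rw [fisherIntegrand, abs_div, abs_of_pos (gaussMix_pos j.pos hp hσ μ x), abs_mul, abs_mul,
    abs_mul, abs_of_pos hφj, abs_of_pos hφh]
  calc |x - μ j| * |x - μ h| * gaussPdf (σ j) (x - μ j) * gaussPdf (σ h) (x - μ h) /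
        gaussMix p σ μ x
      = |x - μ j| * |x - μ h| *
          (gaussPdf (σ j) (x - μ j) * gaussPdf (σ h) (x - μ h) / gaussMix p σ μ x) := by ring
    _ ≤ |x - μ j| * |x - μ h| *
          (√(gaussPdf (σ j) (x - μ j) / p j) * √(gaussPdf (σ h) (x - μ h) / p h)) := by
      gcongr
      exact mul_div_le_sqrt_div_mul_sqrt_div hφj hφh (hp j) (hp h)
        (mul_gaussPdf_le_gaussMix hp hσ μ x j) (mul_gaussPdf_le_gaussMix hp hσ μ x h)
    _ ≤ |x - μ j| * |x - μ h| *
          (√(gaussPdf (σ j) 0 / p j) * exp (-a * (x - μ j) ^ 2) *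
            (√(gaussPdf (σ h) 0 / p h) * exp (-a * (x - μ h) ^ 2))) := by
      gcongr
      · exact sqrt_gaussPdf_div_le (hσ j) haj _
      · exact sqrt_gaussPdf_div_le (hσ h) hah _
    _ = _ := by ring

lemma abs_fisherIntegrand_le_of_le_abs_sub (hp : ∀ ℓ, 0 < p ℓ) (hσ : ∀ ℓ, 0 < σ ℓ)
    (μ : Fin k → ℝ) (j h : Fin k) {a T : ℝ} (ha : 0 < a) (haj : a ≤ (4 * σ j ^ 2)⁻¹)
    (hah : a ≤ (4 * σ h ^ 2)⁻¹) (hT : 0 ≤ T) (hsep : T ≤ |μ j - μ h|) (x : ℝ) :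
    |fisherIntegrand p σ μ j h x| ≤
      √(gaussPdf (σ j) 0 / p j) * √(gaussPdf (σ h) 0 / p h) * exp (-(a / 4) * T ^ 2) *
        (((x - μ j) ^ 2 * exp (-(a / 2) * (x - μ j) ^ 2) +
          (x - μ h) ^ 2 * exp (-(a / 2) * (x - μ h) ^ 2)) / 2) := by
  have huv : T ≤ |(x - μ j) - (x - μ h)| := by rwa [sub_sub_sub_cancel_left, abs_sub_comm]
  calc |fisherIntegrand p σ μ j h x|
      ≤ √(gaussPdf (σ j) 0 / p j) * √(gaussPdf (σ h) 0 / p h) *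
          (|x - μ j| * exp (-a * (x - μ j) ^ 2) * (|x - μ h| * exp (-a * (x - μ h) ^ 2))) :=
        abs_fisherIntegrand_le hp hσ μ j h haj hah x
    _ ≤ √(gaussPdf (σ j) 0 / p j) * √(gaussPdf (σ h) 0 / p h) * (exp (-(a / 4) * T ^ 2) *
          (((x - μ j) ^ 2 * exp (-(a / 2) * (x - μ j) ^ 2) +
            (x - μ h) ^ 2 * exp (-(a / 2) * (x - μ h) ^ 2)) / 2)) :=
      mul_le_mul_of_nonneg_left (abs_mul_exp_mul_abs_mul_exp_le ha hT huv) (by positivity)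
    _ = _ := by ring

lemma integrable_fisherIntegrand (hp : ∀ ℓ, 0 < p ℓ) (hσ : ∀ ℓ, 0 < σ ℓ) (μ : Fin k → ℝ)
    (j h : Fin k) : Integrable (fisherIntegrand p σ μ j h) := by
  have ha : 0 < min (4 * σ j ^ 2)⁻¹ (4 * σ h ^ 2)⁻¹ := by
    have := hσ j; have := hσ h; positivity
  have hbound := abs_fisherIntegrand_le_of_le_abs_sub hp hσ μ j h ha (min_le_left _ _)
    (min_le_right _ _) le_rfl (abs_nonneg _)
  exact Integrable.mono'
    ((integrable_avg_sq_mul_exp_neg_mul_sq_sub (half_pos ha) (μ j) (μ h)).const_mul _)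
    (continuous_fisherIntegrand hp hσ μ j h).aestronglyMeasurable (ae_of_all _ hbound)

lemma abs_meanFisher_le (hp : ∀ ℓ, 0 < p ℓ) (hσ : ∀ ℓ, 0 < σ ℓ) (μ : Fin k → ℝ) (j h : Fin k)
    {a T : ℝ} (ha : 0 < a) (haj : a ≤ (4 * σ j ^ 2)⁻¹) (hah : a ≤ (4 * σ h ^ 2)⁻¹) (hT : 0 ≤ T)
    (hsep : T ≤ |μ j - μ h|) :
    |meanFisher p σ μ j h| ≤
      p j * p h / (σ j ^ 2 * σ h ^ 2) * (√(gaussPdf (σ j) 0 / p j) * √(gaussPdf (σ h) 0 / p h) *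
        ∫ t : ℝ, t ^ 2 * exp (-(a / 2) * t ^ 2)) * exp (-(a / 4) * T ^ 2) := by
  have hcoef : 0 < p j * p h / (σ j ^ 2 * σ h ^ 2) := by
    have := hp j; have := hp h; have := hσ j; have := hσ h; positivity
  have hint : ‖∫ x, fisherIntegrand p σ μ j h x‖ ≤
      ∫ x, √(gaussPdf (σ j) 0 / p j) * √(gaussPdf (σ h) 0 / p h) * exp (-(a / 4) * T ^ 2) *
        (((x - μ j) ^ 2 * exp (-(a / 2) * (x - μ j) ^ 2) +
          (x - μ h) ^ 2 * exp (-(a / 2) * (x - μ h) ^ 2)) / 2) :=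
    norm_integral_le_of_norm_le
      ((integrable_avg_sq_mul_exp_neg_mul_sq_sub (half_pos ha) (μ j) (μ h)).const_mul _)
      (ae_of_all _ (abs_fisherIntegrand_le_of_le_abs_sub hp hσ μ j h ha haj hah hT hsep))
  rw [integral_const_mul, integral_avg_sq_mul_exp_neg_mul_sq_sub (half_pos ha),
    Real.norm_eq_abs] at hint
  rw [meanFisher_apply, abs_mul, abs_of_pos hcoef]
  calc _ ≤ p j * p h / (σ j ^ 2 * σ h ^ 2) *
        (√(gaussPdf (σ j) 0 / p j) * √(gaussPdf (σ h) 0 / p h) * exp (-(a / 4) * T ^ 2) *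
          ∫ t : ℝ, t ^ 2 * exp (-(a / 2) * t ^ 2)) := mul_le_mul_of_nonneg_left hint hcoef.le
    _ = _ := by ring

lemma exists_abs_meanFisher_le_mul_exp (hp : ∀ ℓ, 0 < p ℓ) (hσ : ∀ ℓ, 0 < σ ℓ) :
    ∃ a > 0, ∃ C, ∀ μ j h T, 0 ≤ T → T ≤ |μ j - μ h| →
      |meanFisher p σ μ j h| ≤ C * exp (-a * T ^ 2) := by
  obtain ⟨s, hs⟩ := Finite.exists_le σ
  obtain ⟨a, ha, haσ⟩ : ∃ a > 0, ∀ ℓ, a ≤ (4 * σ ℓ ^ 2)⁻¹ :=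
    ⟨(4 * max s 1 ^ 2)⁻¹, by positivity, fun ℓ => by
      have := hσ ℓ
      gcongr
      exact (hs ℓ).trans (le_max_left _ _)⟩
  obtain ⟨C, hC⟩ := Finite.exists_le fun q : Fin k × Fin k =>
    p q.1 * p q.2 / (σ q.1 ^ 2 * σ q.2 ^ 2) *
      (√(gaussPdf (σ q.1) 0 / p q.1) * √(gaussPdf (σ q.2) 0 / p q.2) *
        ∫ t : ℝ, t ^ 2 * exp (-(a / 2) * t ^ 2))
  refine ⟨a / 4, by positivity, C, fun μ j h T hT hsep => ?_⟩
  exact (abs_meanFisher_le hp hσ μ j h ha (haσ j) (haσ h) hT hsep).trans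
    (mul_le_mul_of_nonneg_right (hC (j, h)) (exp_pos _).le)

lemma exists_pos_le_meanFisher_self (hp : ∀ ℓ, 0 < p ℓ) (hσ : ∀ ℓ, 0 < σ ℓ) (j : Fin k) :
    ∃ d > 0, ∀ μ, d ≤ meanFisher p σ μ j j := by
  set M := ∑ ℓ, p ℓ * gaussPdf (σ ℓ) 0
  have hM : 0 < M :=
    Finset.sum_pos (fun ℓ _ => mul_pos (hp ℓ) (gaussPdf_pos (hσ ℓ) 0)) ⟨j, Finset.mem_univ j⟩
  have hb : 0 < (σ j ^ 2)⁻¹ := by have := hσ j; positivity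
  refine ⟨p j * p j / (σ j ^ 2 * σ j ^ 2) * (gaussPdf (σ j) 0 ^ 2 / M *
      ∫ t : ℝ, t ^ 2 * exp (-(σ j ^ 2)⁻¹ * t ^ 2)), ?_, fun μ => ?_⟩
  · have := hp j; have := hσ j; have := gaussPdf_pos (hσ j) 0
    exact mul_pos (by positivity) (mul_pos (div_pos (by positivity) hM)
      (integral_sq_mul_exp_neg_mul_sq_pos hb))
  have hpt : ∀ x, gaussPdf (σ j) 0 ^ 2 / M * ((x - μ j) ^ 2 * exp (-(σ j ^ 2)⁻¹ * (x - μ j) ^ 2)) ≤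
      fisherIntegrand p σ μ j j x := fun x =>
    calc _ = (x - μ j) ^ 2 * gaussPdf (σ j) (x - μ j) ^ 2 / M := by
          rw [sq_gaussPdf (hσ j) (x - μ j)]; ring
      _ ≤ (x - μ j) ^ 2 * gaussPdf (σ j) (x - μ j) ^ 2 / gaussMix p σ μ x :=
          div_le_div_of_nonneg_left (by positivity) (gaussMix_pos j.pos hp hσ μ x)
            (gaussMix_le_sum hp μ x)
      _ = fisherIntegrand p σ μ j j x := by rw [fisherIntegrand]; ring
  rw [meanFisher_apply]
  refine mul_le_mul_of_nonneg_left ?_ (by have := hp j; positivity)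
  calc _ = ∫ x, gaussPdf (σ j) 0 ^ 2 / M *
        ((x - μ j) ^ 2 * exp (-(σ j ^ 2)⁻¹ * (x - μ j) ^ 2)) := by
        rw [integral_const_mul, integral_sq_mul_exp_neg_mul_sq_sub]
    _ ≤ _ := integral_mono
        (((integrable_sq_mul_exp_neg_mul_sq hb).comp_sub_right (μ j)).const_mul _)
        (integrable_fisherIntegrand hp hσ μ j j) hpt

end Fisher

lemma Matrix.abs_prod_perm_le_of_ne_one {n : Type*} [Fintype n] (M : Matrix n n ℝ) {C ε : ℝ}
    (hC : ∀ i j, |M i j| ≤ C) (hε : ∀ i j, i ≠ j → |M i j| ≤ ε) {τ : Equiv.Perm n}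
    (hτ : τ ≠ 1) : |∏ i, M (τ i) i| ≤ ε * C ^ (Fintype.card n - 1) := by
  classical
  obtain ⟨i₀, hi₀⟩ : ∃ i, τ i ≠ i := by
    by_contra! h
    exact hτ (Equiv.ext h)
  rw [Finset.abs_prod, ← Finset.mul_prod_erase _ _ (Finset.mem_univ i₀)]
  have hrest : ∏ i ∈ Finset.univ.erase i₀, |M (τ i) i| ≤ C ^ (Fintype.card n - 1) := by
    calc _ ≤ ∏ _i ∈ Finset.univ.erase i₀, C :=
          Finset.prod_le_prod (fun i _ => abs_nonneg _) fun i _ => hC (τ i) i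
      _ = C ^ (Fintype.card n - 1) := by simp [Finset.card_erase_of_mem]
  exact mul_le_mul (hε _ _ hi₀) hrest (Finset.prod_nonneg fun i _ => abs_nonneg _)
    ((abs_nonneg _).trans (hε _ _ hi₀))

lemma Matrix.abs_det_sub_prod_diag_le {n : Type*} [Fintype n] [DecidableEq n]
    (M : Matrix n n ℝ) {C ε : ℝ} (hC : ∀ i j, |M i j| ≤ C) (hε : ∀ i j, i ≠ j → |M i j| ≤ ε) :
    |M.det - ∏ i, M i i| ≤
      (Fintype.card (Equiv.Perm n) - 1) * (ε * C ^ (Fintype.card n - 1)) := by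
  rw [Matrix.det_apply, ← Finset.add_sum_erase _ _ (Finset.mem_univ 1)]
  simp only [Equiv.Perm.sign_one, one_smul, Equiv.Perm.one_apply, add_sub_cancel_left]
  calc _ ≤ ∑ τ ∈ Finset.univ.erase 1, |Equiv.Perm.sign τ • ∏ i, M (τ i) i| :=
        Finset.abs_sum_le_sum_abs _ _
    _ ≤ ∑ τ ∈ Finset.univ.erase (1 : Equiv.Perm n), ε * C ^ (Fintype.card n - 1) := by
        refine Finset.sum_le_sum fun τ hτ => ?_
        rw [Units.smul_def, zsmul_eq_mul, abs_mul, abs_unit_intCast, one_mul]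
        exact M.abs_prod_perm_le_of_ne_one hC hε (Finset.ne_of_mem_erase hτ)
    _ = _ := by
        rw [Finset.sum_const, Finset.card_erase_of_mem (Finset.mem_univ _), Finset.card_univ,
          nsmul_eq_mul, Nat.cast_sub Fintype.card_pos, Nat.cast_one]

theorem exists_pos_le_det_meanFisher {k : ℕ} {p σ : Fin k → ℝ} (hp : ∀ ℓ, 0 < p ℓ)
    (hσ : ∀ ℓ, 0 < σ ℓ) :
    ∃ c > 0, ∃ T ≥ 0, ∀ μ : Fin k → ℝ, (∀ j h, j ≠ h → T ≤ |μ j - μ h|) →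
      c ≤ (meanFisher p σ μ).det := by
  choose d hd hdiag using exists_pos_le_meanFisher_self hp hσ
  obtain ⟨a, ha, C, hC⟩ := exists_abs_meanFisher_le_mul_exp hp hσ
  have hD : 0 < ∏ j, d j := Finset.prod_pos fun j _ => hd j
  have hlim : Tendsto (fun T => (Fintype.card (Equiv.Perm (Fin k)) - 1 : ℝ) *
      (C * exp (-a * T ^ 2) * C ^ (k - 1))) atTop (𝓝 0) := by
    have : Tendsto (fun T : ℝ => exp (-a * T ^ 2)) atTop (𝓝 0) :=
      tendsto_exp_atBot.comp
        ((tendsto_pow_atTop two_ne_zero).const_mul_atTop_of_neg (neg_lt_zero.2 ha))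
    simpa using ((this.const_mul C).mul_const (C ^ (k - 1))).const_mul _
  obtain ⟨T, hT, hT0⟩ :=
    ((hlim.eventually_lt_const (half_pos hD)).and (eventually_ge_atTop 0)).exists
  refine ⟨(∏ j, d j) / 2, half_pos hD, T, hT0, fun μ hμ => ?_⟩
  have hdet := (meanFisher p σ μ).abs_det_sub_prod_diag_le
    (fun j h => by simpa using hC μ j h 0 le_rfl (abs_nonneg _))
    (fun j h hjh => hC μ j h T hT0 (hμ j h hjh))
  rw [Fintype.card_fin] at hdet
  have hprod : ∏ j, d j ≤ ∏ j, meanFisher p σ μ j j :=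
    Finset.prod_le_prod (fun j _ => (hd j).le) fun j _ => hdiag j μ
  linarith [(abs_le.1 hdet).1]

def separatedBox (k : ℕ) (T : ℝ) : Set (Fin (k + 2) → ℝ) :=
  Set.univ.pi fun j => if j = Fin.last (k + 1) then Set.Ici ((T + 1) * j)
    else Set.Icc ((T + 1) * j) ((T + 1) * j + 1)

section SeparatedBox

variable {k : ℕ} {T : ℝ} {μ : Fin (k + 2) → ℝ}

lemma measurableSet_separatedBox (k : ℕ) (T : ℝ) : MeasurableSet (separatedBox k T) :=
  MeasurableSet.univ_pi fun j => by
    split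
    · exact measurableSet_Ici
    · exact measurableSet_Icc

lemma volume_separatedBox (k : ℕ) (T : ℝ) : volume (separatedBox k T) = ⊤ := by
  rw [separatedBox, volume_pi_pi, ← Finset.prod_erase_mul _ _ (Finset.mem_univ (Fin.last _)),
    if_pos rfl, Real.volume_Ici, Finset.prod_eq_one fun j hj => by
      rw [if_neg (Finset.ne_of_mem_erase hj), Real.volume_Icc]; simp, one_mul]

lemma mul_le_apply_of_mem_separatedBox (hμ : μ ∈ separatedBox k T) (j : Fin (k + 2)) :
    (T + 1) * j ≤ μ j := by
  have := hμ j (Set.mem_univ j)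
  dsimp only at this
  split at this
  · exact this
  · exact this.1

lemma apply_le_of_mem_separatedBox (hμ : μ ∈ separatedBox k T) {j : Fin (k + 2)}
    (hj : j ≠ Fin.last (k + 1)) : μ j ≤ (T + 1) * j + 1 := by
  have := hμ j (Set.mem_univ j)
  dsimp only at this
  rw [if_neg hj] at this
  exact this.2

lemma abs_le_one_of_mem_separatedBox (hμ : μ ∈ separatedBox k T) : |μ 0| ≤ 1 := by
  have h0 : (0 : Fin (k + 2)) ≠ Fin.last (k + 1) := Fin.last_pos.ne
  have hlow := mul_le_apply_of_mem_separatedBox hμ 0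
  have hupp := apply_le_of_mem_separatedBox hμ h0
  simp only [Fin.val_zero, Nat.cast_zero, mul_zero, zero_add] at hlow hupp
  exact abs_le.2 ⟨by linarith, hupp⟩

lemma le_abs_sub_of_mem_separatedBox (hT : 0 ≤ T) (hμ : μ ∈ separatedBox k T)
    {j h : Fin (k + 2)} (hjh : j ≠ h) : T ≤ |μ j - μ h| := by
  have key : ∀ {j h : Fin (k + 2)}, j < h → T ≤ μ h - μ j := fun {j h} hlt => by
    have hj := apply_le_of_mem_separatedBox hμ (hlt.trans_le (Fin.le_last h)).ne
    have hh := mul_le_apply_of_mem_separatedBox hμ h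
    have : (j : ℝ) + 1 ≤ h := by exact_mod_cast hlt
    nlinarith
  rcases hjh.lt_or_gt with hlt | hlt
  · exact (key hlt).trans (abs_sub_comm (μ j) (μ h) ▸ le_abs_self _)
  · exact (key hlt).trans (le_abs_self _)

end SeparatedBox

lemma mul_gaussPdf_le_gaussMix_of_abs_le {k : ℕ} {p σ : Fin k → ℝ} (hp : ∀ ℓ, 0 < p ℓ)
    (hσ : ∀ ℓ, 0 < σ ℓ) {μ : Fin k → ℝ} {r : ℝ} {ℓ : Fin k} (hμ : |μ ℓ| ≤ r) (y : ℝ) :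
    p ℓ * gaussPdf (σ ℓ) (|y| + r) ≤ gaussMix p σ μ y := by
  refine (mul_le_mul_of_nonneg_left (gaussPdf_le_gaussPdf_of_abs_le ?_) (hp ℓ).le).trans
    (mul_gaussPdf_le_gaussMix hp hσ μ y ℓ)
  calc |y - μ ℓ| ≤ |y| + |μ ℓ| := abs_sub _ _
    _ ≤ |y| + r := by gcongr
    _ ≤ |(|y| + r)| := le_abs_self _

lemma lintegral_ofReal_eq_top_of_forall_le {α : Type*} [MeasurableSpace α] {ν : Measure α}
    {f : α → ℝ} {s : Set α} {c : ℝ} (hs : MeasurableSet s) (hνs : ν s = ⊤) (hc : 0 < c)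
    (hf : ∀ x ∈ s, c ≤ f x) : ∫⁻ x, ENNReal.ofReal (f x) ∂ν = ⊤ :=
  top_unique <| calc
    ⊤ = ∫⁻ _ in s, ENNReal.ofReal c ∂ν := by
      rw [setLIntegral_const, hνs, ENNReal.mul_top (ENNReal.ofReal_pos.2 hc).ne']
    _ ≤ ∫⁻ x in s, ENNReal.ofReal (f x) ∂ν :=
      setLIntegral_mono' hs fun x hx => ENNReal.ofReal_le_ofReal (hf x hx)
    _ ≤ _ := setLIntegral_le_lintegral _ _

theorem posterior_means_jeffreys_improper_general (m n : ℕ)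
    (p σ : Fin (m + 3) → ℝ) (hp : ∀ ℓ, 0 < p ℓ)
    (hσ : ∀ ℓ, 0 < σ ℓ) (x : Fin n → ℝ) :
    (∫⁻ μ : Fin (m + 3) → ℝ,
        ENNReal.ofReal
          ((∏ i, gaussMix p σ μ (x i)) * Real.sqrt (meanFisher p σ μ).det)) = ⊤ := by
  obtain ⟨c, hc, T, hT, hdet⟩ := exists_pos_le_det_meanFisher hp hσ
  have hL : 0 < ∏ i, p 0 * gaussPdf (σ 0) (|x i| + 1) :=
    Finset.prod_pos fun i _ => mul_pos (hp 0) (gaussPdf_pos (hσ 0) _)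
  refine lintegral_ofReal_eq_top_of_forall_le (measurableSet_separatedBox (m + 1) T)
    (volume_separatedBox (m + 1) T) (mul_pos hL (sqrt_pos.2 hc)) fun μ hμ => ?_
  have hlik : ∏ i, p 0 * gaussPdf (σ 0) (|x i| + 1) ≤ ∏ i, gaussMix p σ μ (x i) :=
    Finset.prod_le_prod (fun i _ => (mul_pos (hp 0) (gaussPdf_pos (hσ 0) _)).le) fun i _ =>
      mul_gaussPdf_le_gaussMix_of_abs_le hp hσ (abs_le_one_of_mem_separatedBox hμ) (x i)
  have hprior : √c ≤ √(meanFisher p σ μ).det :=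
    sqrt_le_sqrt (hdet μ fun j h hjh => le_abs_sub_of_mem_separatedBox hT hμ hjh)
  exact mul_le_mul hlik hprior (sqrt_nonneg _) (hL.le.trans hlik)

/-- for a Gaussian mixture with `k = m + 3 ≥ 3` components, fixed
positive weights summing to one, fixed positive scales, and any `n ≥ 1` observations
`x₁, …, xₙ`, the posterior of the means derived from the Jeffreys prior is improper:
`∫_{ℝ^k} (∏ᵢ g(xᵢ; μ)) √(det I(μ)) dμ = +∞`. -/
theorem posterior_means_jeffreys_improper (m n : ℕ) (hn : 1 ≤ n)
    (p σ : Fin (m + 3) → ℝ) (hp : ∀ ℓ, 0 < p ℓ) (hsum : ∑ ℓ, p ℓ = 1)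
    (hσ : ∀ ℓ, 0 < σ ℓ) (x : Fin n → ℝ) :
    (∫⁻ μ : Fin (m + 3) → ℝ,
        ENNReal.ofReal
          ((∏ i, gaussMix p σ μ (x i)) * Real.sqrt (meanFisher p σ μ).det)) = ⊤ :=
  posterior_means_jeffreys_improper_general m n p σ hp hσ x
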